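/- Let γ : ℝ → ℝ² be a smooth closed unit-speed curve with period ℓ, and define F(x₀, t₀) = (4πt₀)^{−1/2} ∫₀^ℓ e^{−|γ(t)−x₀|²/(4t₀)} dt for x₀ ∈ ℝ² and t₀ > 0, and λ(γ) = sup over x₀, t₀ of F(x₀,t₀). Then for every x₀ ∈ ℝ² and t₀ > 0, the partial derivative ∂F/∂t₀ (x₀, t₀) satisfies ∂F/∂t₀ (x₀, t₀) ≥ −(λ(γ)/4) · sup_t H(t)². -/

import Mathlib

noncomputable section
open Real MeasureTheory
open scoped RealInnerProductSpace

abbrev E2 := EuclideanSpace ℝ (Fin 2)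

/-- The unit normal of a unit-speed plane curve: `γ′` rotated by `−π/2`. -/
def normal (γ : ℝ → E2) (t : ℝ) : E2 := WithLp.toLp 2 ![deriv γ t 1, -(deriv γ t 0)]

/-- The curvature `H = −⟨γ″, n⟩` of a unit-speed plane curve. -/
def curv (γ : ℝ → E2) (t : ℝ) : ℝ := -⟪deriv (deriv γ) t, normal γ t⟫

/-- The Gaussian weighted length functional `F_{x₀,t₀}` of a closed curve of period `ℓ`. -/
def Fcur (γ : ℝ → E2) (ℓ : ℝ) (x₀ : E2) (t₀ : ℝ) : ℝ :=
  (4 * π * t₀) ^ (-(1:ℝ)/2) * ∫ t in (0:ℝ)..ℓ, Real.exp (-‖γ t - x₀‖ ^ 2 / (4 * t₀))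

/-- The entropy `λ(γ) = sup_{x₀,t₀} F_{x₀,t₀}(γ)` of a closed curve of period `ℓ`. -/
def entCur (γ : ℝ → E2) (ℓ : ℝ) : ℝ :=
  sSup {a : ℝ | ∃ x₀ : E2, ∃ t₀ : ℝ, 0 < t₀ ∧ a = Fcur γ ℓ x₀ t₀}

/-!
Differentiating under the integral sign, `∂_{t₀} F = (4πt₀)^{-1/2} ∫ (|x|²/(4t₀²) - 1/(2t₀)) w`
with `x = γ - x₀` and `w = exp (-|x|²/(4t₀))`. Since `⟪x, γ'⟫ w` is `ℓ`-periodic, its derivative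
`(1 + ⟪x, γ''⟫ - ⟪x, γ'⟫²/(2t₀)) w` integrates to zero; adding `1/(2t₀)` times it and using
`|x|² = ⟪x, γ'⟫² + ⟪x, n⟫²` and `γ'' = -H n`, the integrand becomes `(y² - H y) w` with
`y = ⟪x, n⟫/(2t₀)`, which is at least `-(H²/4) w`. Hence `∂_{t₀} F ≥ -(sup H²/4) F ≥ -(sup H²/4) λ`.

The last step needs `λ < ∞` (otherwise the `sSup` defining it is `0`). On a parameter interval of
length at most `1/(2K)`, where `K` is a Lipschitz constant of `γ'`, the curve satisfies
`|t - s| ≤ 2 |γ t - γ s|`, so `|t - t₁| ≤ 4 |γ t - x₀|` for the point `t₁` of the interval closest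
to `x₀`; comparing with a Gaussian in `t`, each such piece contributes at most `4` to `F`.
-/

open Set Function

theorem rpow_neg_one_div_two_mul_sqrt {x : ℝ} (hx : 0 < x) : x ^ (-(1 : ℝ) / 2) * √x = 1 := by
  rw [sqrt_eq_rpow, ← rpow_add hx]
  norm_num

theorem intervalIntegral_le_nat_mul {f : ℝ → ℝ} (hf : Continuous f) {h B : ℝ}
    (hB : ∀ k : ℕ, ∫ t in k * h..(k + 1) * h, f t ≤ B) (N : ℕ) :
    ∫ t in (0 : ℝ)..N * h, f t ≤ N * B := by
  induction N with
  | zero => simp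
  | succ N ih =>
    rw [← intervalIntegral.integral_add_adjacent_intervals (b := N * h)
      (hf.intervalIntegrable _ _) (hf.intervalIntegrable _ _)]
    push_cast
    linarith [hB N]

theorem intervalIntegral_exp_neg_sq_div_le {r : ℝ → ℝ} {a b t₁ c τ : ℝ} (hr : Continuous r)
    (hab : a ≤ b) (hc : 0 < c) (hτ : 0 < τ) (hle : ∀ t ∈ Icc a b, |t - t₁| ≤ c * r t) :
    ∫ t in a..b, exp (-r t ^ 2 / (4 * τ)) ≤ c * √(4 * π * τ) := by
  set β := (4 * c ^ 2 * τ)⁻¹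
  have hβ : 0 < β := by positivity
  have hgauss : Integrable fun t => exp (-β * (t - t₁) ^ 2) :=
    (integrable_exp_neg_mul_sq hβ).comp_sub_right t₁
  have hpt : ∀ t ∈ Icc a b, exp (-r t ^ 2 / (4 * τ)) ≤ exp (-β * (t - t₁) ^ 2) := by
    intro t ht
    have hsq : (t - t₁) ^ 2 ≤ c ^ 2 * r t ^ 2 := by
      rw [← sq_abs, ← mul_pow]
      exact pow_le_pow_left₀ (abs_nonneg _) (hle t ht) 2
    rw [exp_le_exp, neg_mul, neg_div, neg_le_neg_iff, div_eq_mul_inv, ← le_div_iff₀' hβ]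
    calc (t - t₁) ^ 2 ≤ c ^ 2 * r t ^ 2 := hsq
      _ = r t ^ 2 * (4 * τ)⁻¹ / β := by simp only [β]; field_simp
  calc ∫ t in a..b, exp (-r t ^ 2 / (4 * τ))
      ≤ ∫ t in a..b, exp (-β * (t - t₁) ^ 2) :=
        intervalIntegral.integral_mono_on hab
          ((by fun_prop : Continuous fun t => exp (-r t ^ 2 / (4 * τ))).intervalIntegrable _ _)
          hgauss.intervalIntegrable hpt
    _ ≤ ∫ t, exp (-β * (t - t₁) ^ 2) := by
        rw [intervalIntegral.integral_of_le hab]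
        exact setIntegral_le_integral hgauss (ae_of_all _ fun _ => (exp_pos _).le)
    _ = c * √(4 * π * τ) := by
        rw [integral_sub_right_eq_self (fun t => exp (-β * t ^ 2)) t₁, integral_gaussian,
          div_inv_eq_mul, show π * (4 * c ^ 2 * τ) = c ^ 2 * (4 * π * τ) by ring,
          sqrt_mul (sq_nonneg c), sqrt_sq hc.le]

section NormedSpace

variable {E : Type*} [NormedAddCommGroup E] [NormedSpace ℝ E]

theorem Function.Periodic.deriv {f : ℝ → E} {c : ℝ} (h : Periodic f c) : Periodic (deriv f) c :=
  fun t => by rw [← deriv_comp_add_const, show (fun s => f (s + c)) = f from funext h]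

theorem ContDiff.exists_lipschitzWith_of_periodic {f : ℝ → E} {c : ℝ} (hf : ContDiff ℝ 1 f)
    (hp : Periodic f c) (hc : c ≠ 0) : ∃ K, LipschitzWith K f := by
  obtain ⟨C, hC⟩ := (hp.deriv.isBounded_of_continuous hc hf.continuous_deriv_one).exists_norm_le
  refine ⟨C.toNNReal, lipschitzWith_of_nnnorm_deriv_le (hf.differentiable one_ne_zero)
    fun t => ?_⟩
  rw [← norm_toNNReal]
  exact Real.toNNReal_le_toNNReal (hC _ (mem_range_self t))

theorem abs_sub_le_two_mul_norm_sub {γ : ℝ → E} {K : NNReal} (hγ : Differentiable ℝ γ)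
    (hlip : LipschitzWith K (deriv γ)) {s t : ℝ} (hs : ‖deriv γ s‖ = 1)
    (hst : 2 * K * |t - s| ≤ 1) : |t - s| ≤ 2 * ‖γ t - γ s‖ := by
  set f : ℝ → E := fun u => γ u - (u - s) • deriv γ s
  have hderiv : ∀ u ∈ uIcc s t, HasDerivWithinAt f (deriv γ u - deriv γ s) (uIcc s t) u :=
    fun u _ => by
      have := (hγ u).hasDerivAt.sub (((hasDerivAt_id u).sub_const s).smul_const (deriv γ s))
      rw [one_smul] at this
      exact this.hasDerivWithinAt
  have hbound : ∀ u ∈ uIcc s t, ‖deriv γ u - deriv γ s‖ ≤ 1 / 2 := fun u hu =>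
    calc ‖deriv γ u - deriv γ s‖ ≤ K * |u - s| := by
          simpa [dist_eq_norm, Real.dist_eq] using hlip.dist_le_mul u s
      _ ≤ K * |t - s| := mul_le_mul_of_nonneg_left (abs_sub_left_of_mem_uIcc hu) K.2
      _ ≤ 1 / 2 := by linarith
  have hmvt := (convex_uIcc s t).norm_image_sub_le_of_norm_hasDerivWithin_le hderiv hbound
    left_mem_uIcc right_mem_uIcc
  have hf : f t - f s = (γ t - γ s) - (t - s) • deriv γ s := by
    simp only [f, sub_self, zero_smul, sub_zero]; abel
  have htri := norm_sub_norm_le ((t - s) • deriv γ s) (γ t - γ s)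
  rw [hf, Real.norm_eq_abs] at hmvt
  rw [norm_sub_rev ((t - s) • deriv γ s), norm_smul, hs, mul_one, Real.norm_eq_abs] at htri
  linarith

theorem intervalIntegral_exp_neg_norm_sub_sq_le {γ : ℝ → E} {K : NNReal}
    (hγ : Differentiable ℝ γ) (hunit : ∀ t, ‖deriv γ t‖ = 1) (hlip : LipschitzWith K (deriv γ))
    (x₀ : E) {a b τ : ℝ} (hab : a ≤ b) (hK : 2 * K * (b - a) ≤ 1) (hτ : 0 < τ) :
    ∫ t in a..b, exp (-‖γ t - x₀‖ ^ 2 / (4 * τ)) ≤ 4 * √(4 * π * τ) := by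
  have hr : Continuous fun t => ‖γ t - x₀‖ := (hγ.continuous.sub continuous_const).norm
  obtain ⟨t₁, ht₁, hmin⟩ := isCompact_Icc.exists_isMinOn (nonempty_Icc.2 hab) hr.continuousOn
  refine intervalIntegral_exp_neg_sq_div_le (t₁ := t₁) hr hab four_pos hτ fun t ht => ?_
  have hdist : |t - t₁| ≤ b - a :=
    abs_sub_le_iff.2 ⟨by linarith [ht.2, ht₁.1], by linarith [ht.1, ht₁.2]⟩
  have hchord := abs_sub_le_two_mul_norm_sub hγ hlip (hunit t₁)
    (le_trans (by gcongr) hK : 2 * K * |t - t₁| ≤ 1)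
  have htri := norm_sub_le_norm_sub_add_norm_sub (γ t) x₀ (γ t₁)
  have hnear : ‖γ t₁ - x₀‖ ≤ ‖γ t - x₀‖ := hmin ht
  rw [norm_sub_rev x₀] at htri
  linarith

end NormedSpace

theorem Fcur_le {γ : ℝ → E2} {K : NNReal} {ℓ : ℝ} (hγ : Differentiable ℝ γ)
    (hunit : ∀ t, ‖deriv γ t‖ = 1) (hlip : LipschitzWith K (deriv γ)) (hℓ : 0 ≤ ℓ) (x₀ : E2)
    {t₀ : ℝ} (ht₀ : 0 < t₀) : Fcur γ ℓ x₀ t₀ ≤ 4 * (⌈2 * K * ℓ⌉₊ + 1) := by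
  set N : ℕ := ⌈2 * K * ℓ⌉₊ + 1
  have hN : (0 : ℝ) < N := by positivity
  have hpiece : ∀ k : ℕ, ∫ t in k * (ℓ / N)..(k + 1) * (ℓ / N),
      exp (-‖γ t - x₀‖ ^ 2 / (4 * t₀)) ≤ 4 * √(4 * π * t₀) := fun k => by
    refine intervalIntegral_exp_neg_norm_sub_sq_le hγ hunit hlip x₀ (by gcongr; linarith) ?_ ht₀
    have : 2 * K * ℓ ≤ N := (Nat.le_ceil _).trans (by simp [N])
    rw [← sub_mul, add_sub_cancel_left, one_mul, ← mul_div_assoc, div_le_one hN]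
    exact this
  have hint := intervalIntegral_le_nat_mul (by have := hγ.continuous; fun_prop) hpiece N
  rw [mul_div_cancel₀ _ hN.ne'] at hint
  calc Fcur γ ℓ x₀ t₀ ≤ (4 * π * t₀) ^ (-(1 : ℝ) / 2) * (N * (4 * √(4 * π * t₀))) :=
        mul_le_mul_of_nonneg_left hint (by positivity)
    _ = 4 * N * ((4 * π * t₀) ^ (-(1 : ℝ) / 2) * √(4 * π * t₀)) := by ring
    _ = 4 * (⌈2 * K * ℓ⌉₊ + 1) := by
        rw [rpow_neg_one_div_two_mul_sqrt (by positivity)]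
        simp [N]

theorem Fcur_le_entCur {γ : ℝ → E2} {ℓ : ℝ} (hγ : ContDiff ℝ 2 γ)
    (hunit : ∀ t, ‖deriv γ t‖ = 1) (hℓ : 0 < ℓ) (hper : Periodic γ ℓ) (x₀ : E2) {t₀ : ℝ}
    (ht₀ : 0 < t₀) : Fcur γ ℓ x₀ t₀ ≤ entCur γ ℓ := by
  obtain ⟨K, hK⟩ := (contDiff_succ_iff_deriv.1 hγ).2.2.exists_lipschitzWith_of_periodic
    hper.deriv hℓ.ne'
  refine le_csSup ⟨4 * (⌈2 * K * ℓ⌉₊ + 1), ?_⟩ ⟨x₀, t₀, ht₀, rfl⟩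
  rintro _ ⟨x, t, ht, rfl⟩
  exact Fcur_le (hγ.differentiable two_ne_zero) hunit hK hℓ.le x ht

theorem hasDerivAt_exp_neg_div (c : ℝ) {x : ℝ} (hx : x ≠ 0) :
    HasDerivAt (fun s => exp (-c / (4 * s))) (c / (4 * x ^ 2) * exp (-c / (4 * x))) x := by
  have h := ((hasDerivAt_inv hx).const_mul (-c / 4)).exp
  have hdiv : ∀ s, -c / (4 * s) = -c / 4 * s⁻¹ := fun s => by ring
  simp only [hdiv] at h ⊢
  convert h using 1
  ring

theorem hasDerivAt_intervalIntegral_exp_neg_sq_div {r : ℝ → ℝ} (hr : Continuous r) (a b : ℝ)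
    {τ : ℝ} (hτ : 0 < τ) :
    HasDerivAt (fun s => ∫ t in a..b, exp (-r t ^ 2 / (4 * s)))
      (∫ t in a..b, r t ^ 2 / (4 * τ ^ 2) * exp (-r t ^ 2 / (4 * τ))) τ := by
  have hball : Metric.ball τ (τ / 2) ⊆ Ioi (τ / 2) := fun x hx => by
    rw [Metric.mem_ball, Real.dist_eq, abs_lt] at hx
    exact show τ / 2 < x by linarith
  refine (intervalIntegral.hasDerivAt_integral_of_dominated_loc_of_deriv_le
    (F := fun s t => exp (-r t ^ 2 / (4 * s)))
    (F' := fun s t => r t ^ 2 / (4 * s ^ 2) * exp (-r t ^ 2 / (4 * s)))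
    (μ := volume) (bound := fun _ => 2 / τ) (Metric.ball_mem_nhds τ (half_pos hτ)) ?_ ?_ ?_ ?_
    intervalIntegrable_const ?_).2
  · exact Filter.Eventually.of_forall fun x => (by fun_prop : Continuous _).aestronglyMeasurable
  · exact (by fun_prop : Continuous _).intervalIntegrable _ _
  · exact (by fun_prop : Continuous _).aestronglyMeasurable
  · refine ae_of_all _ fun t _ x hx => ?_
    have hx : τ / 2 < x := hball hx
    have hx0 : 0 < x := by linarith
    have hbound := mul_exp_neg_le_exp_neg_one (r t ^ 2 / (4 * x))
    have hexp : exp (-1) ≤ 1 := exp_le_one_iff.2 (by norm_num)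
    rw [Real.norm_of_nonneg (by positivity)]
    calc r t ^ 2 / (4 * x ^ 2) * exp (-r t ^ 2 / (4 * x))
        = (r t ^ 2 / (4 * x) * exp (-(r t ^ 2 / (4 * x)))) / x := by
          rw [neg_div]; field_simp
      _ ≤ 1 / x := by gcongr; linarith
      _ ≤ 2 / τ := by rw [div_le_div_iff₀ hx0 hτ]; linarith
  · exact ae_of_all _ fun t _ x hx => hasDerivAt_exp_neg_div _ ((half_pos hτ).trans (hball hx)).ne'

theorem hasDerivAt_rpow_neg_one_div_two {τ : ℝ} (hτ : 0 < τ) :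
    HasDerivAt (fun s => (4 * π * s) ^ (-(1 : ℝ) / 2)) (-(4 * π * τ) ^ (-(1 : ℝ) / 2) / (2 * τ))
      τ := by
  have h := ((hasDerivAt_id τ).const_mul (4 * π)).rpow_const (p := -(1 : ℝ) / 2)
    (Or.inl (by positivity))
  simp only [id, mul_one] at h
  convert h using 1
  rw [rpow_sub (by positivity), rpow_one]
  field_simp

theorem hasDerivAt_Fcur {γ : ℝ → E2} (hγ : Continuous γ) (ℓ : ℝ) (x₀ : E2) {t₀ : ℝ}
    (ht₀ : 0 < t₀) :
    HasDerivAt (fun s => Fcur γ ℓ x₀ s) ((4 * π * t₀) ^ (-(1 : ℝ) / 2) *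
      ∫ t in (0 : ℝ)..ℓ, (‖γ t - x₀‖ ^ 2 / (4 * t₀ ^ 2) - 1 / (2 * t₀)) *
        exp (-‖γ t - x₀‖ ^ 2 / (4 * t₀))) t₀ := by
  have hr : Continuous fun t => ‖γ t - x₀‖ := (hγ.sub continuous_const).norm
  refine ((hasDerivAt_rpow_neg_one_div_two ht₀).mul
    (hasDerivAt_intervalIntegral_exp_neg_sq_div hr 0 ℓ ht₀)).congr_deriv ?_
  simp only [sub_mul]
  rw [intervalIntegral.integral_sub ((by fun_prop : Continuous _).intervalIntegrable _ _)
    ((by fun_prop : Continuous _).intervalIntegrable _ _), intervalIntegral.integral_const_mul]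
  ring

section InnerProductSpace

variable {F : Type*} [NormedAddCommGroup F] [InnerProductSpace ℝ F] {γ : ℝ → F}

theorem inner_deriv_deriv_self_eq_zero (hunit : ∀ t, ‖deriv γ t‖ = 1) {t : ℝ}
    (hd : DifferentiableAt ℝ (deriv γ) t) : ⟪deriv (deriv γ) t, deriv γ t⟫ = 0 := by
  have hconst : (fun s => ‖deriv γ s‖ ^ 2) = fun _ => 1 := funext fun s => by simp [hunit]
  have h := hd.hasDerivAt.norm_sq
  rw [hconst] at h
  simpa [real_inner_comm] using h.unique (hasDerivAt_const t 1)

theorem hasDerivAt_inner_deriv_mul_exp (hγ : ContDiff ℝ 2 γ) (x₀ : F) (τ : ℝ) {t : ℝ}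
    (hunit : ‖deriv γ t‖ = 1) :
    HasDerivAt (fun s => ⟪γ s - x₀, deriv γ s⟫ * exp (-‖γ s - x₀‖ ^ 2 / (4 * τ)))
      ((1 + ⟪γ t - x₀, deriv (deriv γ) t⟫ - ⟪γ t - x₀, deriv γ t⟫ ^ 2 / (2 * τ)) *
        exp (-‖γ t - x₀‖ ^ 2 / (4 * τ))) t := by
  have hx : HasDerivAt (fun s => γ s - x₀) (deriv γ t) t :=
    ((hγ.differentiable two_ne_zero) t).hasDerivAt.sub_const x₀
  have hT := (hγ.differentiable_deriv_two t).hasDerivAt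
  have h := (hx.inner ℝ hT).mul ((hx.norm_sq.neg.div_const (4 * τ)).exp)
  refine h.congr_deriv ?_
  rw [Pi.neg_apply, real_inner_self_eq_norm_sq, hunit]
  field_simp
  ring

end InnerProductSpace

theorem E2.inner_eq (v w : E2) : ⟪v, w⟫ = v 0 * w 0 + v 1 * w 1 := by
  simp [PiLp.inner_apply, Fin.sum_univ_two, mul_comm]

theorem E2.norm_sq_eq (v : E2) : ‖v‖ ^ 2 = v 0 ^ 2 + v 1 ^ 2 := by
  simp [EuclideanSpace.norm_sq_eq, Fin.sum_univ_two]

section PlaneCurve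

variable {γ : ℝ → E2}

theorem normal_apply_zero (t : ℝ) : normal γ t 0 = deriv γ t 1 := rfl

theorem normal_apply_one (t : ℝ) : normal γ t 1 = -deriv γ t 0 := rfl

theorem deriv_deriv_eq_neg_curv_smul_normal {t : ℝ} (hunit : ‖deriv γ t‖ = 1)
    (horth : ⟪deriv (deriv γ) t, deriv γ t⟫ = 0) :
    deriv (deriv γ) t = -curv γ t • normal γ t := by
  have hT := E2.norm_sq_eq (deriv γ t)
  rw [hunit, one_pow, eq_comm] at hT
  rw [E2.inner_eq] at horth
  refine PiLp.ext (Fin.forall_fin_two.2 ⟨?_, ?_⟩) <;>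
    simp only [PiLp.smul_apply, smul_eq_mul, curv, E2.inner_eq, normal_apply_zero,
      normal_apply_one]
  · linear_combination -(deriv (deriv γ) t 0) * hT + deriv γ t 0 * horth
  · linear_combination -(deriv (deriv γ) t 1) * hT + deriv γ t 1 * horth

theorem sq_inner_deriv_add_sq_inner_normal {t : ℝ} (hunit : ‖deriv γ t‖ = 1) (v : E2) :
    ⟪v, deriv γ t⟫ ^ 2 + ⟪v, normal γ t⟫ ^ 2 = ‖v‖ ^ 2 := by
  have hT := E2.norm_sq_eq (deriv γ t)
  rw [hunit, one_pow, eq_comm] at hT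
  rw [E2.inner_eq, E2.inner_eq, E2.norm_sq_eq, normal_apply_zero, normal_apply_one]
  linear_combination (v 0 ^ 2 + v 1 ^ 2) * hT

theorem neg_sq_curv_div_four_mul_exp_le {t τ : ℝ} (hτ : 0 < τ) (hunit : ‖deriv γ t‖ = 1)
    (horth : ⟪deriv (deriv γ) t, deriv γ t⟫ = 0) (x₀ : E2) :
    -(curv γ t ^ 2 / 4) * exp (-‖γ t - x₀‖ ^ 2 / (4 * τ)) ≤
      (‖γ t - x₀‖ ^ 2 / (4 * τ ^ 2) - 1 / (2 * τ)) * exp (-‖γ t - x₀‖ ^ 2 / (4 * τ)) +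
      (1 + ⟪γ t - x₀, deriv (deriv γ) t⟫ - ⟪γ t - x₀, deriv γ t⟫ ^ 2 / (2 * τ)) *
        exp (-‖γ t - x₀‖ ^ 2 / (4 * τ)) / (2 * τ) := by
  set e := exp (-‖γ t - x₀‖ ^ 2 / (4 * τ))
  have hA : ⟪γ t - x₀, deriv (deriv γ) t⟫ = -curv γ t * ⟪γ t - x₀, normal γ t⟫ := by
    rw [deriv_deriv_eq_neg_curv_smul_normal hunit horth, real_inner_smul_right]
  have hsplit := sq_inner_deriv_add_sq_inner_normal hunit (γ t - x₀)
  have hsquare : (‖γ t - x₀‖ ^ 2 / (4 * τ ^ 2) - 1 / (2 * τ)) * e +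
      (1 + ⟪γ t - x₀, deriv (deriv γ) t⟫ - ⟪γ t - x₀, deriv γ t⟫ ^ 2 / (2 * τ)) * e / (2 * τ) =
      -(curv γ t ^ 2 / 4) * e + (⟪γ t - x₀, normal γ t⟫ / (2 * τ) - curv γ t / 2) ^ 2 * e := by
    rw [hA, ← hsplit]
    field_simp
    ring
  rw [hsquare]
  exact le_add_of_nonneg_right (by positivity)

theorem neg_mul_integral_exp_le {S ℓ : ℝ} (hγ : ContDiff ℝ 2 γ) (hunit : ∀ t, ‖deriv γ t‖ = 1)
    (hper : Periodic γ ℓ) (hℓ : 0 ≤ ℓ) (hS : ∀ t, curv γ t ^ 2 ≤ S) (x₀ : E2) {t₀ : ℝ}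
    (ht₀ : 0 < t₀) :
    -(S / 4) * ∫ t in (0 : ℝ)..ℓ, exp (-‖γ t - x₀‖ ^ 2 / (4 * t₀)) ≤
      ∫ t in (0 : ℝ)..ℓ, (‖γ t - x₀‖ ^ 2 / (4 * t₀ ^ 2) - 1 / (2 * t₀)) *
        exp (-‖γ t - x₀‖ ^ 2 / (4 * t₀)) := by
  have hγ' : Continuous (deriv γ) := hγ.continuous_deriv one_le_two
  have hγ'' : Continuous (deriv (deriv γ)) :=
    (contDiff_succ_iff_deriv.1 hγ).2.2.continuous_deriv_one
  have hγ₀ := hγ.continuous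
  have hboundary : ∫ t in (0 : ℝ)..ℓ, (1 + ⟪γ t - x₀, deriv (deriv γ) t⟫ -
      ⟪γ t - x₀, deriv γ t⟫ ^ 2 / (2 * t₀)) * exp (-‖γ t - x₀‖ ^ 2 / (4 * t₀)) = 0 := by
    rw [intervalIntegral.integral_eq_sub_of_hasDerivAt
      (fun t _ => hasDerivAt_inner_deriv_mul_exp hγ x₀ t₀ (hunit t))
      ((by fun_prop : Continuous _).intervalIntegrable _ _), hper.eq, hper.deriv.eq, sub_self]
  calc -(S / 4) * ∫ t in (0 : ℝ)..ℓ, exp (-‖γ t - x₀‖ ^ 2 / (4 * t₀))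
      = ∫ t in (0 : ℝ)..ℓ, -(S / 4) * exp (-‖γ t - x₀‖ ^ 2 / (4 * t₀)) :=
        (intervalIntegral.integral_const_mul _ _).symm
    _ ≤ ∫ t in (0 : ℝ)..ℓ, ((‖γ t - x₀‖ ^ 2 / (4 * t₀ ^ 2) - 1 / (2 * t₀)) *
          exp (-‖γ t - x₀‖ ^ 2 / (4 * t₀)) + (1 + ⟪γ t - x₀, deriv (deriv γ) t⟫ -
          ⟪γ t - x₀, deriv γ t⟫ ^ 2 / (2 * t₀)) * exp (-‖γ t - x₀‖ ^ 2 / (4 * t₀)) / (2 * t₀)) := by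
        refine intervalIntegral.integral_mono_on hℓ
          ((by fun_prop : Continuous _).intervalIntegrable _ _)
          ((by fun_prop : Continuous _).intervalIntegrable _ _) fun t _ => ?_
        refine le_trans ?_ (neg_sq_curv_div_four_mul_exp_le ht₀ (hunit t)
          (inner_deriv_deriv_self_eq_zero hunit (hγ.differentiable_deriv_two t)) x₀)
        gcongr
        exact hS t
    _ = _ := by
        rw [intervalIntegral.integral_add ((by fun_prop : Continuous _).intervalIntegrable _ _)
          ((by fun_prop : Continuous _).intervalIntegrable _ _), intervalIntegral.integral_div,
          hboundary, zero_div, add_zero]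

theorem bddAbove_range_sq_curv {γ : ℝ → E2} {ℓ : ℝ} (hγ : ContDiff ℝ 2 γ) (hℓ : ℓ ≠ 0)
    (hper : Periodic γ ℓ) : BddAbove (range fun t => curv γ t ^ 2) := by
  have hT : Continuous (deriv γ) := hγ.continuous_deriv one_le_two
  have hA : Continuous (deriv (deriv γ)) :=
    (contDiff_succ_iff_deriv.1 hγ).2.2.continuous_deriv_one
  have hcont : Continuous fun t => curv γ t ^ 2 := by
    unfold curv normal
    fun_prop
  have hperiodic : Periodic (fun t => curv γ t ^ 2) ℓ := fun t => by
    simp only [curv, normal, hper.deriv t, hper.deriv.deriv t]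
  exact (hperiodic.isBounded_of_continuous hℓ hcont).bddAbove

end PlaneCurve

/-- For a smooth closed unit-speed curve, the partial derivative of
`F_{x₀,t₀}` in `t₀` exists and is at least `−(λ(γ)/4)·sup H²`. -/
theorem stmt14 (γ : ℝ → E2) (hγ : ContDiff ℝ (⊤ : ℕ∞) γ)
    (hunit : ∀ t, ‖deriv γ t‖ = 1)
    (ℓ : ℝ) (hℓ : 0 < ℓ) (hper : ∀ t, γ (t + ℓ) = γ t)
    (x₀ : E2) (t₀ : ℝ) (ht₀ : 0 < t₀) :
    ∃ d : ℝ, HasDerivAt (fun s => Fcur γ ℓ x₀ s) d t₀ ∧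
      -(entCur γ ℓ / 4) * sSup (Set.range fun t => curv γ t ^ 2) ≤ d := by
  have hγ₂ : ContDiff ℝ 2 γ := hγ.of_le (by norm_cast)
  set S := sSup (Set.range fun t => curv γ t ^ 2)
  have hS : ∀ t, curv γ t ^ 2 ≤ S := fun t =>
    le_csSup (bddAbove_range_sq_curv hγ₂ hℓ.ne' hper) (mem_range_self t)
  have hS₀ : 0 ≤ S := (sq_nonneg _).trans (hS 0)
  have hF := Fcur_le_entCur hγ₂ hunit hℓ hper x₀ ht₀
  refine ⟨_, hasDerivAt_Fcur hγ₂.continuous ℓ x₀ ht₀, ?_⟩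
  calc -(entCur γ ℓ / 4) * S ≤ -(S / 4) * Fcur γ ℓ x₀ t₀ := by nlinarith
    _ = (4 * π * t₀) ^ (-(1 : ℝ) / 2) *
        (-(S / 4) * ∫ t in (0 : ℝ)..ℓ, exp (-‖γ t - x₀‖ ^ 2 / (4 * t₀))) := by
        rw [Fcur]; ring
    _ ≤ _ := mul_le_mul_of_nonneg_left
        (neg_mul_integral_exp_le hγ₂ hunit hper hℓ.le hS x₀ ht₀) (by positivity)
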